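/- arXiv:2105.11996 — 7 statements merged into one kernel-verified Lean document; each statement's English description precedes it below -/
import Mathlib

section
/- There is a constant C such that for every n ≥ 1 and every subset A of the Boolean cube {0,1}^n, there exist a dimension m, a bounded set Q ⊆ ℝ^m that is cut out by at most C · 2^⌈n/2⌉ closed halfspaces, and an affine map π : ℝ^m → ℝ^n such that π(Q) ⊆ [0,1]^n and π(Q) ∩ {0,1}^n = A. -/
/-!
Split `n = n₁ + n₂` with `n₁ = ⌈n/2⌉` and view a vertex of `{0,1}^n` as a pair `(c, d)` of
vertices of `{0,1}^{n₁}` and `{0,1}^{n₂}`, so that `A` becomes a relation between the two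
smaller cubes. Lift to pairs `(λ, μ)` of probability vectors on the vertices of the two cubes,
projected to their pair of means, and impose for every `c` the separation inequality
`λ c + μ {d | (c, d) ∉ A} ≤ 1`. A vertex of a cube is an extreme point, so a mean equal to a
vertex forces a point mass there; hence a lifted point over a vertex `(c, d)` is
`(δ_c, δ_d)`, which satisfies the separation inequality at `c` exactly when `(c, d) ∈ A`.
This uses `2^{n₁} + 2^{n₂}` variables and `2·2^{n₁} + 2^{n₂} + 4 ≤ 7·2^{⌈n/2⌉}` inequalities.
-/

/-- The Boolean cube `{0,1}^n` inside `ℝ^n`. -/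
def booleanCube (n : ℕ) : Set (Fin n → ℝ) := {x | ∀ i, x i = 0 ∨ x i = 1}

/-- `Q ⊆ ℝ^m` is cut out by `k` closed halfspaces. -/
def CutOutBy {m : ℕ} (Q : Set (Fin m → ℝ)) (k : ℕ) : Prop :=
  ∃ (a : Fin k → Fin m → ℝ) (b : Fin k → ℝ),
    Q = {y | ∀ i, ∑ j, a i j * y j ≤ b i}

open Set Bornology

section Halfspaces

variable {ι ι' : Type*} (κ : Type*)

def CutOutByHalfspaces (R : Set (ι → ℝ)) : Prop :=
  ∃ (ℓ : κ → Module.Dual ℝ (ι → ℝ)) (b : κ → ℝ), R = {w | ∀ k, ℓ k w ≤ b k}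

variable {κ}

theorem cutOutByHalfspaces_setOf_eq (ℓ : Module.Dual ℝ (ι → ℝ)) (c : ℝ) :
    CutOutByHalfspaces Bool {w | ℓ w = c} := by
  refine ⟨fun s => bif s then ℓ else -ℓ, fun s => bif s then c else -c, ?_⟩
  ext w
  simp [le_antisymm_iff, and_comm]

theorem CutOutByHalfspaces.inter {κ' : Type*} {R R' : Set (ι → ℝ)}
    (hR : CutOutByHalfspaces κ R) (hR' : CutOutByHalfspaces κ' R') :
    CutOutByHalfspaces (κ ⊕ κ') (R ∩ R') := by
  obtain ⟨ℓ, b, rfl⟩ := hR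
  obtain ⟨ℓ', b', rfl⟩ := hR'
  exact ⟨Sum.elim ℓ ℓ', Sum.elim b b', by ext w; simp [Sum.forall]⟩

theorem CutOutByHalfspaces.preimage {R : Set (ι → ℝ)} (hR : CutOutByHalfspaces κ R)
    (f : (ι' → ℝ) →ₗ[ℝ] (ι → ℝ)) : CutOutByHalfspaces κ (f ⁻¹' R) := by
  obtain ⟨ℓ, b, rfl⟩ := hR
  exact ⟨fun k => ℓ k ∘ₗ f, b, rfl⟩

theorem CutOutByHalfspaces.cutOutBy [Fintype κ] {m : ℕ} {R : Set (Fin m → ℝ)}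
    (hR : CutOutByHalfspaces κ R) : CutOutBy R (Fintype.card κ) := by
  obtain ⟨ℓ, b, rfl⟩ := hR
  let e := (Fintype.equivFin κ).symm
  refine ⟨fun i j => ℓ (e i) fun j' => if j = j' then 1 else 0, fun i => b (e i), ?_⟩
  ext w
  simp only [mem_ofPred_eq, e.forall_congr_left, Equiv.apply_symm_apply,
    LinearMap.pi_apply_eq_sum_univ (ℓ _) w, smul_eq_mul, mul_comm]

theorem exists_cutOutBy_image_eq [Fintype ι] [Fintype κ] {E : Type*} [AddCommGroup E]
    [Module ℝ E] {R : Set (ι → ℝ)} (hR : CutOutByHalfspaces κ R) (hRb : IsBounded R)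
    (p : (ι → ℝ) →ₗ[ℝ] E) :
    ∃ (m : ℕ) (Q : Set (Fin m → ℝ)) (π : (Fin m → ℝ) →ᵃ[ℝ] E),
      IsBounded Q ∧ CutOutBy Q (Fintype.card κ) ∧ π '' Q = p '' R := by
  let e := ContinuousLinearEquiv.piCongrLeft ℝ (fun _ : ι => ℝ) (Fintype.equivFin ι).symm
  refine ⟨_, e ⁻¹' R, (p ∘ₗ (e : (Fin _ → ℝ) →ₗ[ℝ] (ι → ℝ))).toAffineMap, ?_, ?_, ?_⟩
  · rw [← e.image_symm_eq_preimage]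
    exact e.symm.lipschitz.isBounded_image hRb
  · exact (hR.preimage e.toLinearEquiv.toLinearMap).cutOutBy
  · rw [LinearMap.coe_toAffineMap, LinearMap.coe_comp, image_comp]
    exact congrArg _ (image_preimage_eq R e.surjective)

end Halfspaces

section SepPolytope

variable {α β : Type*} [Fintype α] [Fintype β]

open Classical in
def sepPolytope (A : Set (α × β)) : Set (α ⊕ β → ℝ) :=
  {w | (∀ j, 0 ≤ w j) ∧ ∑ a, w (.inl a) = 1 ∧ ∑ b, w (.inr b) = 1 ∧
    ∀ a, w (.inl a) + ∑ b with (a, b) ∉ A, w (.inr b) ≤ 1}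

variable {A : Set (α × β)}

theorem cutOutByHalfspaces_sepPolytope (A : Set (α × β)) :
    CutOutByHalfspaces ((α ⊕ β) ⊕ Bool ⊕ Bool ⊕ α) (sepPolytope A) := by
  classical
  let ev : α ⊕ β → Module.Dual ℝ (α ⊕ β → ℝ) := LinearMap.proj
  have hnonneg : CutOutByHalfspaces (α ⊕ β) {w | ∀ j, (-ev j) w ≤ 0} := ⟨_, fun _ => 0, rfl⟩
  have hsep : CutOutByHalfspaces α
      {w | ∀ a, (ev (.inl a) + ∑ b with (a, b) ∉ A, ev (.inr b)) w ≤ 1} :=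
    ⟨_, fun _ => 1, rfl⟩
  convert hnonneg.inter <| (cutOutByHalfspaces_setOf_eq (∑ a, ev (.inl a)) 1).inter <|
    (cutOutByHalfspaces_setOf_eq (∑ b, ev (.inr b)) 1).inter hsep using 1
  ext w
  simp [sepPolytope, ev]

theorem sepPolytope_subset_Icc : sepPolytope A ⊆ Icc 0 1 := by
  rintro w ⟨hw₀, hα, hβ, -⟩
  refine ⟨hw₀, fun j => ?_⟩
  rcases j with a | b
  · exact (Finset.single_le_sum (fun a _ => hw₀ (.inl a)) (Finset.mem_univ a)).trans hα.le
  · exact (Finset.single_le_sum (fun b _ => hw₀ (.inr b)) (Finset.mem_univ b)).trans hβ.le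

theorem isBounded_sepPolytope (A : Set (α × β)) : IsBounded (sepPolytope A) :=
  (Metric.isBounded_Icc 0 1).subset sepPolytope_subset_Icc

theorem sumElim_single_mem_sepPolytope [DecidableEq α] [DecidableEq β] {a : α} {b : β}
    (h : (a, b) ∈ A) : Sum.elim (Pi.single a 1) (Pi.single b 1) ∈ sepPolytope A := by
  refine ⟨?_, by simp, by simp, fun a' => ?_⟩
  · rintro (a' | b') <;> simp [Pi.single_apply, apply_ite]
  · by_cases ha : a' = a
    · subst ha; simp [h]
    · simp [ha, ite_le_one]

theorem mem_of_mem_sepPolytope {w : α ⊕ β → ℝ} (hw : w ∈ sepPolytope A) {a : α} {b : β}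
    (ha : w (.inl a) = 1) (hb : w (.inr b) = 1) : (a, b) ∈ A := by
  classical
  obtain ⟨hw₀, -, -, hsep⟩ := hw
  by_contra hab
  have : w (.inr b) ≤ ∑ b' with (a, b') ∉ A, w (.inr b') :=
    Finset.single_le_sum (fun b' _ => hw₀ (.inr b')) (by simpa using hab)
  linarith [hsep a]

end SepPolytope

section Weights

variable {α : Type*} [Fintype α] {w : α → ℝ}

theorem eq_sum_mul_of_sum_mul_eq_zero_or_one (hw₀ : ∀ a, 0 ≤ w a) (hw₁ : ∑ a, w a = 1)
    {t : α → ℝ} (ht : ∀ a, t a ∈ Icc (0 : ℝ) 1)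
    (hs : ∑ a, w a * t a = 0 ∨ ∑ a, w a * t a = 1) {a : α} (ha : w a ≠ 0) :
    t a = ∑ b, w b * t b := by
  rcases hs with hs | hs
  · have := (Finset.sum_eq_zero_iff_of_nonneg fun b _ => mul_nonneg (hw₀ b) (ht b).1).1 hs a
      (Finset.mem_univ a)
    rw [hs]
    exact (mul_eq_zero.1 this).resolve_left ha
  · have hs' : ∑ b, w b * (1 - t b) = 0 := by
      simp [mul_sub, Finset.sum_sub_distrib, hw₁, hs]
    have := (Finset.sum_eq_zero_iff_of_nonneg fun b _ =>
      mul_nonneg (hw₀ b) (sub_nonneg.2 (ht b).2)).1 hs' a (Finset.mem_univ a)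
    rw [hs]
    linarith [(mul_eq_zero.1 this).resolve_left ha]

theorem eq_sum_smul_of_sum_smul_mem_booleanCube {n : ℕ} (hw₀ : ∀ a, 0 ≤ w a)
    (hw₁ : ∑ a, w a = 1) {v : α → Fin n → ℝ} (hv : ∀ a i, v a i ∈ Icc (0 : ℝ) 1)
    (hx : ∑ a, w a • v a ∈ booleanCube n) {a : α} (ha : w a ≠ 0) :
    v a = ∑ b, w b • v b := by
  ext i
  have hx : ∑ b, w b * v b i = 0 ∨ ∑ b, w b * v b i = 1 := by
    simpa [Finset.sum_apply] using hx i
  simpa [Finset.sum_apply] using eq_sum_mul_of_sum_mul_eq_zero_or_one hw₀ hw₁ (hv · i) hx ha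

end Weights

section BooleanCube

variable {n n₁ n₂ : ℕ}

def boolVec (c : Fin n → Bool) : Fin n → ℝ := fun i => if c i then 1 else 0

theorem boolVec_injective : Function.Injective (boolVec (n := n)) := by
  intro c c' h
  funext i
  have := congrFun h i
  cases hc : c i <;> cases hc' : c' i <;> simp_all [boolVec]

theorem boolVec_mem_Icc (c : Fin n → Bool) (i : Fin n) : boolVec c i ∈ Icc (0 : ℝ) 1 := by
  unfold boolVec; split_ifs <;> simp

theorem boolVec_mem_booleanCube (c : Fin n → Bool) : boolVec c ∈ booleanCube n := by
  intro i; unfold boolVec; split_ifs <;> simp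

theorem exists_boolVec_eq {x : Fin n → ℝ} (hx : x ∈ booleanCube n) : ∃ c, boolVec c = x := by
  refine ⟨fun i => decide (x i = 1), funext fun i => ?_⟩
  rcases hx i with h | h <;> simp [boolVec, h]

theorem Fin.append_inj {α : Type*} {x x' : Fin n₁ → α} {y y' : Fin n₂ → α} :
    Fin.append x y = Fin.append x' y' ↔ x = x' ∧ y = y' := by
  rw [← Prod.mk_inj]
  exact (Fin.appendEquiv n₁ n₂).injective.eq_iff (a := (x, y)) (b := (x', y'))

theorem exists_append_boolVec_eq {x : Fin (n₁ + n₂) → ℝ} (hx : x ∈ booleanCube (n₁ + n₂)) :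
    ∃ c d, Fin.append (boolVec c) (boolVec d) = x := by
  obtain ⟨c, hc⟩ := exists_boolVec_eq (x := fun i => x (Fin.castAdd n₂ i)) fun i => hx _
  obtain ⟨d, hd⟩ := exists_boolVec_eq (x := fun i => x (Fin.natAdd n₁ i)) fun i => hx _
  exact ⟨c, d, by rw [hc, hd, Fin.append_castAdd_natAdd]⟩

theorem weight_eq_one_of_sum_smul_boolVec_eq {w : (Fin n → Bool) → ℝ} (hw₀ : ∀ c, 0 ≤ w c)
    (hw₁ : ∑ c, w c = 1) {c : Fin n → Bool} (h : ∑ c', w c' • boolVec c' = boolVec c) :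
    w c = 1 := by
  have hx : ∑ c', w c' • boolVec c' ∈ booleanCube n := h ▸ boolVec_mem_booleanCube c
  have hzero : ∀ c' ≠ c, w c' = 0 := fun c' hc' => by_contra fun hne =>
    hc' (boolVec_injective
      ((eq_sum_smul_of_sum_smul_mem_booleanCube hw₀ hw₁ boolVec_mem_Icc hx hne).trans h))
  rw [← hw₁, Finset.sum_eq_single c (fun c' _ => hzero c') (by simp)]

end BooleanCube

section SepProj

variable {n₁ n₂ : ℕ}

variable (n₁ n₂) in
def sepProj : ((Fin n₁ → Bool) ⊕ (Fin n₂ → Bool) → ℝ) →ₗ[ℝ] (Fin (n₁ + n₂) → ℝ) where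
  toFun w := Fin.append (∑ c, w (.inl c) • boolVec c) (∑ d, w (.inr d) • boolVec d)
  map_add' w w' := by
    ext i; refine Fin.addCases (fun i => ?_) (fun i => ?_) i <;>
      simp [add_smul, Finset.sum_add_distrib]
  map_smul' r w := by
    ext i; refine Fin.addCases (fun i => ?_) (fun i => ?_) i <;>
      simp [mul_smul, Finset.mul_sum]

theorem sepProj_apply (w : (Fin n₁ → Bool) ⊕ (Fin n₂ → Bool) → ℝ) :
    sepProj n₁ n₂ w = Fin.append (∑ c, w (.inl c) • boolVec c) (∑ d, w (.inr d) • boolVec d) :=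
  rfl


theorem sepProj_sumElim_single (c : Fin n₁ → Bool) (d : Fin n₂ → Bool) :
    sepProj n₁ n₂ (Sum.elim (Pi.single c 1) (Pi.single d 1)) =
      Fin.append (boolVec c) (boolVec d) := by
  simp [sepProj_apply, Pi.single_apply]

theorem sepProj_image_subset_pi_Icc (A : Set ((Fin n₁ → Bool) × (Fin n₂ → Bool))) :
    sepProj n₁ n₂ '' sepPolytope A ⊆ univ.pi fun _ => Icc 0 1 := by
  rintro _ ⟨w, ⟨hw₀, hα, hβ, -⟩, rfl⟩ i -
  have hcube (k : ℕ) : Convex ℝ (univ.pi fun _ : Fin k => Icc (0 : ℝ) 1) :=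
    convex_pi fun _ _ => convex_Icc 0 1
  have h₁ := (hcube n₁).sum_mem (fun c _ => hw₀ (.inl c)) hα fun c _ i _ => boolVec_mem_Icc c i
  have h₂ := (hcube n₂).sum_mem (fun d _ => hw₀ (.inr d)) hβ fun d _ i _ => boolVec_mem_Icc d i
  refine Fin.addCases (fun i => ?_) (fun i => ?_) i
  · simpa [sepProj_apply] using h₁ i (mem_univ i)
  · simpa [sepProj_apply] using h₂ i (mem_univ i)

theorem sepProj_image_sepPolytope_inter_booleanCube {A : Set (Fin (n₁ + n₂) → ℝ)}
    (hA : A ⊆ booleanCube (n₁ + n₂)) :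
    sepProj n₁ n₂ '' sepPolytope {p | Fin.append (boolVec p.1) (boolVec p.2) ∈ A} ∩
      booleanCube (n₁ + n₂) = A := by
  refine subset_antisymm ?_ fun x hxA => ?_
  · rintro x ⟨⟨w, hw, rfl⟩, hx⟩
    obtain ⟨c, d, hcd⟩ := exists_append_boolVec_eq hx
    rw [sepProj_apply] at hcd
    obtain ⟨hc, hd⟩ := Fin.append_inj.1 hcd.symm
    have hwc := weight_eq_one_of_sum_smul_boolVec_eq (fun c => hw.1 (.inl c)) hw.2.1 hc
    have hwd := weight_eq_one_of_sum_smul_boolVec_eq (fun d => hw.1 (.inr d)) hw.2.2.1 hd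
    rw [sepProj_apply, hc, hd]
    exact mem_of_mem_sepPolytope hw hwc hwd
  · obtain ⟨c, d, rfl⟩ := exists_append_boolVec_eq (hA hxA)
    exact ⟨⟨_, sumElim_single_mem_sepPolytope hxA, sepProj_sumElim_single c d⟩, hA hxA⟩

end SepProj

/-- Every `A ⊆ {0,1}^n` has a separating polytope contained in `[0,1]^n`
with extension complexity `O(2^{n/2})`. -/
theorem sep_upper_bound :
    ∃ C : ℕ, ∀ n : ℕ, 1 ≤ n → ∀ A : Set (Fin n → ℝ), A ⊆ booleanCube n →
      ∃ (m k : ℕ) (Q : Set (Fin m → ℝ)) (π : (Fin m → ℝ) →ᵃ[ℝ] (Fin n → ℝ)),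
        k ≤ C * 2 ^ ((n + 1) / 2) ∧
        Bornology.IsBounded Q ∧
        CutOutBy Q k ∧
        π '' Q ⊆ Set.univ.pi (fun _ => Set.Icc (0 : ℝ) 1) ∧
        π '' Q ∩ booleanCube n = A := by
  refine ⟨7, fun n _ A hA => ?_⟩
  obtain ⟨n₁, n₂, rfl, h₂₁, h₁⟩ :
      ∃ n₁ n₂, n = n₁ + n₂ ∧ n₂ ≤ n₁ ∧ n₁ = (n₁ + n₂ + 1) / 2 :=
    ⟨(n + 1) / 2, n / 2, by omega, by omega, by omega⟩
  obtain ⟨m, Q, π, hQ, hQk, hπQ⟩ := exists_cutOutBy_image_eq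
    (cutOutByHalfspaces_sepPolytope _) (isBounded_sepPolytope _) (sepProj n₁ n₂)
  refine ⟨m, _, Q, π, ?_, hQ, hQk, hπQ ▸ sepProj_image_subset_pi_Icc _,
    hπQ ▸ sepProj_image_sepPolytope_inter_booleanCube hA⟩
  simp only [Fintype.card_sum, Fintype.card_bool, Fintype.card_fun, Fintype.card_fin]
  rw [← h₁]
  have := Nat.pow_le_pow_right two_pos h₂₁
  have := Nat.one_le_two_pow (n := n₁)
  omega
end

section
/- Let n ≥ 2 and let ODD_n ⊆ {0,1}^n be the set of Boolean vectors with an odd number of coordinates equal to 1. If P ⊆ ℝ^n is an intersection of r closed halfspaces (i.e., P = {x | ∀ i ∈ Fin r, ∑_j a i j · x j ≤ b i} for some a, b) and P ∩ {0,1}^n = ODD_n, then r ≥ 2^{n−1}. -/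
/-- The set of Boolean vectors with an odd number of coordinates equal to 1. -/
def oddCube (n : ℕ) : Set (Fin n → ℝ) :=
  {x | x ∈ booleanCube n ∧ Odd ({i | x i = 1}.ncard)}

open Finset

theorem Finset.card_filter_even_card_univ (α : Type*) [Fintype α] [DecidableEq α] :
    #{s : Finset α | Even #s} = 2 ^ (Fintype.card α - 1) := by
  rcases isEmpty_or_nonempty α with hα | hα
  · simp [Finset.univ_unique, Finset.filter_singleton, Finset.eq_empty_of_isEmpty default]
  have hsigned : (#{s : Finset α | Even #s} : ℤ) - #{s : Finset α | ¬Even #s} = 0 := by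
    rw [← sum_powerset_neg_one_pow_card_of_nonempty (univ_nonempty (α := α)), powerset_univ,
      ← sum_filter_add_sum_filter_not univ (fun s => Even #s),
      sum_congr rfl fun s hs => (mem_filter.1 hs).2.neg_one_pow,
      sum_congr rfl fun s hs => (Nat.not_even_iff_odd.1 (mem_filter.1 hs).2).neg_one_pow]
    simp [sub_eq_add_neg]
  have htotal := card_filter_add_card_filter_not (s := (univ : Finset (Finset α))) (Even #·)
  rw [card_univ, Fintype.card_finset] at htotal
  have hpow : 2 ^ Fintype.card α = 2 * 2 ^ (Fintype.card α - 1) := by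
    rw [← pow_succ', Nat.sub_add_cancel Fintype.card_pos]
  omega

section CubeVertex

variable {ι : Type*} [DecidableEq ι]

noncomputable def cubeVertex (s : Finset ι) : ι → ℝ := fun i => if i ∈ s then 1 else 0

theorem cubeVertex_erase_add_insert {s t : Finset ι} {j : ι} (hs : j ∈ s) (ht : j ∉ t) :
    cubeVertex (s.erase j) + cubeVertex (insert j t) = cubeVertex s + cubeVertex t := by
  ext k
  by_cases hk : k = j
  · subst hk
    simp [cubeVertex, hs, ht]
  · simp [cubeVertex, hk]

theorem eq_of_even_of_lt_dotProduct_cubeVertex [Fintype ι] {a : ι → ℝ} {b : ℝ}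
    (hodd : ∀ s : Finset ι, Odd #s → a ⬝ᵥ cubeVertex s ≤ b) {s t : Finset ι}
    (hs : Even #s) (ht : Even #t) (hbs : b < a ⬝ᵥ cubeVertex s) (hbt : b < a ⬝ᵥ cubeVertex t) :
    s = t := by
  by_contra hne
  wlog hst : ¬s ⊆ t generalizing s t
  · exact this ht hs hbt hbs (Ne.symm hne) fun hts => hne (subset_antisymm (not_not.1 hst) hts)
  obtain ⟨j, hjs, hjt⟩ := not_subset.1 hst
  have hs' := hodd (s.erase j) (by
    rw [card_erase_of_mem hjs]
    exact Nat.Even.sub_odd (one_le_card.2 ⟨j, hjs⟩) hs odd_one)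
  have ht' := hodd (insert j t) (by rw [card_insert_of_notMem hjt]; exact ht.add_one)
  have hsum := congrArg (a ⬝ᵥ ·) (cubeVertex_erase_add_insert hjs hjt)
  simp only [dotProduct_add] at hsum
  linarith

end CubeVertex

theorem cubeVertex_mem_booleanCube {n : ℕ} (s : Finset (Fin n)) : cubeVertex s ∈ booleanCube n :=
  fun i => by by_cases h : i ∈ s <;> simp [cubeVertex, h]

theorem cubeVertex_mem_oddCube_iff {n : ℕ} {s : Finset (Fin n)} :
    cubeVertex s ∈ oddCube n ↔ Odd #s := by
  have hones : {i | cubeVertex s i = 1} = ↑s := by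
    ext i
    by_cases h : i ∈ s <;> simp [cubeVertex, h]
  simp [oddCube, cubeVertex_mem_booleanCube, hones]

theorem odd_needs_many_facets_general (n r : ℕ)
    (a : Fin r → Fin n → ℝ) (b : Fin r → ℝ)
    (P : Set (Fin n → ℝ))
    (hP : P = {x | ∀ i, ∑ j, a i j * x j ≤ b i})
    (hsep : P ∩ booleanCube n = oddCube n) :
    2 ^ (n - 1) ≤ r := by
  subst hP
  have hmem (s : Finset (Fin n)) : (∀ i, a i ⬝ᵥ cubeVertex s ≤ b i) ↔ Odd #s := by
    rw [← cubeVertex_mem_oddCube_iff, ← hsep]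
    simp [cubeVertex_mem_booleanCube, dotProduct]
  have hcut (s : {s : Finset (Fin n) // Even #s}) : ∃ i, b i < a i ⬝ᵥ cubeVertex s.1 := by
    by_contra! h
    exact Nat.not_odd_iff_even.2 s.2 ((hmem s).1 h)
  choose facet hfacet using hcut
  have hinj : Function.Injective facet := fun s t hst => Subtype.ext <|
    eq_of_even_of_lt_dotProduct_cubeVertex (fun u hu => (hmem u).2 hu (facet s)) s.2 t.2
      (hfacet s) (hst ▸ hfacet t)
  simpa [Fintype.card_subtype, card_filter_even_card_univ] using
    Fintype.card_le_of_injective facet hinj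

/-- Every separating polytope for `ODD_n` given directly as an intersection of
`r` closed halfspaces satisfies `r ≥ 2^{n-1}`. -/
theorem odd_needs_many_facets (n r : ℕ) (hn : 2 ≤ n)
    (a : Fin r → Fin n → ℝ) (b : Fin r → ℝ)
    (P : Set (Fin n → ℝ))
    (hP : P = {x | ∀ i, ∑ j, a i j * x j ≤ b i})
    (hsep : P ∩ booleanCube n = oddCube n) :
    2 ^ (n - 1) ≤ r :=
  odd_needs_many_facets_general n r a b P hP hsep
end

section
/- Let n ≥ 2, let a : Fin n → ℝ and b ∈ ℝ, and let H = {x : Fin n → ℝ | ∑_i a i · x i ≥ b} be a closed halfspace. If H contains every Boolean vector with an odd number of 1-coordinates, then the complement of H contains at most one Boolean vector with an even number of 1-coordinates. -/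
/-!
Two distinct even Boolean vectors `x`, `y` differ in some coordinate `i`. Exchanging their
`i`-th coordinates yields two odd Boolean vectors whose sum is still `x + y`, so the linear
form `∑ aᵢ xᵢ` takes the same total value on both pairs. If the odd pair lies in `H` and the
even pair does not, this total is both `≥ 2b` and `< 2b`.
-/

open Function

section Update

variable {ι α : Type*} [DecidableEq ι]

theorem update_add_update_swap [AddCommMagma α] (x y : ι → α) (i : ι) :
    update x i (y i) + update y i (x i) = x + y := by
  ext j
  rcases eq_or_ne j i with rfl | hj
  · simp [add_comm]
  · simp [hj]

theorem setOf_update_eq_self (x : ι → α) (i : ι) (c : α) :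
    {j | update x i c j = c} = insert i {j | x j = c} := by
  ext j
  rcases eq_or_ne j i with rfl | hj
  · simp
  · simp [hj]

theorem setOf_update_eq_of_ne (x : ι → α) (i : ι) {v c : α} (hv : v ≠ c) :
    {j | update x i v j = c} = {j | x j = c} \ {i} := by
  ext j
  rcases eq_or_ne j i with rfl | hj
  · simp [hv]
  · simp [hj]

theorem sum_mul_update_add_sum_mul_update [Fintype ι] [NonUnitalNonAssocSemiring α]
    (a x y : ι → α) (i : ι) :
    ∑ j, a j * update x i (y i) j + ∑ j, a j * update y i (x i) j
      = ∑ j, a j * x j + ∑ j, a j * y j := by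
  simp only [← Finset.sum_add_distrib, ← mul_add]
  exact Finset.sum_congr rfl fun j _ => by
    rw [← Pi.add_apply (update x i _), update_add_update_swap, Pi.add_apply]

end Update

theorem update_mem_booleanCube {n : ℕ} {x : Fin n → ℝ} (hx : x ∈ booleanCube n) {i : Fin n}
    {v : ℝ} (hv : v = 0 ∨ v = 1) : update x i v ∈ booleanCube n := by
  intro j
  rcases eq_or_ne j i with rfl | hj
  · simpa using hv
  · simpa [hj] using hx j

theorem odd_ncard_update_of_even {n : ℕ} {x : Fin n → ℝ} (hx : x ∈ booleanCube n)
    {i : Fin n} {v : ℝ} (hv : v = 0 ∨ v = 1) (hne : x i ≠ v)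
    (heven : Even {j | x j = 1}.ncard) : Odd {j | update x i v j = 1}.ncard := by
  rcases hv with rfl | rfl
  · have hi : i ∈ {j | x j = 1} := (hx i).resolve_left hne
    rw [← Set.ncard_sdiff_singleton_add_one hi, Nat.even_add_one, Nat.not_even_iff_odd] at heven
    rwa [setOf_update_eq_of_ne x i zero_ne_one]
  · rw [setOf_update_eq_self, Set.ncard_insert_of_notMem (s := {j | x j = 1}) hne]
    exact heven.add_one

theorem halfspace_complement_at_most_one_even_general (n : ℕ)
    (a : Fin n → ℝ) (b : ℝ) (H : Set (Fin n → ℝ))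
    (hH : H = {x | b ≤ ∑ i, a i * x i})
    (hodd : ∀ x ∈ booleanCube n, Odd ({i | x i = 1}.ncard) → x ∈ H) :
    Set.Subsingleton {x | x ∈ booleanCube n ∧ Even ({i | x i = 1}.ncard) ∧ x ∉ H} := by
  subst hH
  rintro x ⟨hxC, hxE, hxH⟩ y ⟨hyC, hyE, hyH⟩
  by_contra hxy
  obtain ⟨i, hi⟩ := ne_iff.mp hxy
  have hx' : b ≤ ∑ j, a j * update x i (y i) j :=
    hodd _ (update_mem_booleanCube hxC (hyC i)) (odd_ncard_update_of_even hxC (hyC i) hi hxE)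
  have hy' : b ≤ ∑ j, a j * update y i (x i) j :=
    hodd _ (update_mem_booleanCube hyC (hxC i))
      (odd_ncard_update_of_even hyC (hxC i) (Ne.symm hi) hyE)
  simp only [Set.mem_ofPred_eq, not_le] at hxH hyH
  linarith [sum_mul_update_add_sum_mul_update a x y i]

/-- If a closed halfspace contains all odd Boolean vectors, then its complement
contains at most one even Boolean vector. -/
theorem halfspace_complement_at_most_one_even (n : ℕ) (hn : 2 ≤ n)
    (a : Fin n → ℝ) (b : ℝ) (H : Set (Fin n → ℝ))
    (hH : H = {x | b ≤ ∑ i, a i * x i})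
    (hodd : ∀ x ∈ booleanCube n, Odd ({i | x i = 1}.ncard) → x ∈ H) :
    Set.Subsingleton {x | x ∈ booleanCube n ∧ Even ({i | x i = 1}.ncard) ∧ x ∉ H} :=
  halfspace_complement_at_most_one_even_general n a b H hH hodd
end

section
/- Let n ≥ 1 and let H be a set of Boolean vectors in {0,1}^n each having exactly two coordinates equal to 1; write i ~ j (for i ≠ j) when the vector e_i + e_j lies in H, and let N(i) = {j | i ~ j}. Define R_H = {x : Fin n → ℝ | (∀ i, 0 ≤ x i) ∧ (∑_i x i = 2) ∧ (∀ i, x i ≤ ∑_{j ∈ N(i)} x j)}. Then R_H ⊆ [0,1]^n and R_H ∩ {0,1}^n = H. -/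
open Finset

lemma add_sum_indicator_le_sum {ι M : Type*} [Fintype ι] [DecidableEq ι] [AddCommMonoid M]
    [PartialOrder M] [IsOrderedAddMonoid M] {x : ι → M} (hx : 0 ≤ x) {s : Set ι} {i : ι}
    (hi : i ∉ s) : x i + ∑ j, s.indicator x j ≤ ∑ j, x j := by
  calc x i + ∑ j, s.indicator x j
        = ∑ j, ((Pi.single i (x i) : ι → M) j + s.indicator x j) := by
        rw [sum_add_distrib]; simp
    _ ≤ ∑ j, x j := by
        refine sum_le_sum fun j _ => ?_
        by_cases hj : j = i
        · subst hj; simp [hi]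
        · simpa [hj] using s.indicator_le_self' (fun k _ => hx k) j

lemma sum_indicator_single {ι M : Type*} [Fintype ι] [DecidableEq ι] [AddCommMonoid M]
    (s : Set ι) (i : ι) (a : M) :
    ∑ k, s.indicator (Pi.single i a) k = s.indicator (fun _ => a) i := by
  rw [sum_eq_single i (fun k _ hk => by simp [hk]) (by simp)]
  by_cases hi : i ∈ s <;> simp [hi]

lemma single_add_single_le_sum_indicator_iff {ι : Type*} [Fintype ι] [DecidableEq ι]
    {N : ι → Set ι} (hN : ∀ k, k ∉ N k) {i j : ι} (hij : i ≠ j) :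
    (∀ k, (Pi.single i 1 + Pi.single j 1 : ι → ℝ) k ≤
      ∑ l, (N k).indicator (Pi.single i 1 + Pi.single j 1) l) ↔ j ∈ N i ∧ i ∈ N j := by
  simp only [Set.indicator_add', Pi.add_apply, sum_add_distrib, sum_indicator_single]
  have indicator_nonneg (s : Set ι) (l : ι) : (0 : ℝ) ≤ s.indicator (fun _ => 1) l :=
    Set.indicator_nonneg (fun _ _ => zero_le_one) l
  constructor
  · intro h
    have hi := h i
    have hj := h j
    simp only [Pi.single_eq_same, Pi.single_eq_of_ne hij, Pi.single_eq_of_ne hij.symm,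
      Set.indicator_of_notMem (hN _), add_zero, zero_add] at hi hj
    exact ⟨Set.mem_of_indicator_ne_zero (zero_lt_one.trans_le hi).ne',
      Set.mem_of_indicator_ne_zero (zero_lt_one.trans_le hj).ne'⟩
  · rintro ⟨hji, hij'⟩ k
    by_cases hki : k = i
    · subst hki; simp [hij, hN, hji]
    by_cases hkj : k = j
    · subst hkj; simp [hij, hN, hij']
    simpa [hki, hkj] using add_nonneg (indicator_nonneg (N k) i) (indicator_nonneg (N k) j)

namespace booleanCube

variable {n : ℕ} {x : Fin n → ℝ}

lemma nonneg (hx : x ∈ booleanCube n) : 0 ≤ x := fun i => by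
  rcases hx i with h | h <;> simp [h]

lemma sum_eq_ncard (hx : x ∈ booleanCube n) : ∑ i, x i = {i | x i = 1}.ncard := by
  rw [← coe_filter_univ, Set.ncard_coe_finset, ← sum_boole]
  exact sum_congr rfl fun i _ => by rcases hx i with h | h <;> simp [h]

lemma ncard_eq_two_iff : x ∈ booleanCube n ∧ {i | x i = 1}.ncard = 2 ↔
    ∃ i j, i ≠ j ∧ x = Pi.single i 1 + Pi.single j 1 := by
  constructor
  · rintro ⟨hx, hcard⟩
    obtain ⟨i, j, hij, hones⟩ := Set.ncard_eq_two.1 hcard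
    refine ⟨i, j, hij, funext fun k => ?_⟩
    have hk : x k = 1 ↔ k = i ∨ k = j := by simpa using Set.ext_iff.1 hones k
    rcases hx k with h | h <;> by_cases hki : k = i <;> by_cases hkj : k = j <;> simp_all
  · rintro ⟨i, j, hij, rfl⟩
    refine ⟨fun k => ?_, ?_⟩
    · by_cases hki : k = i <;> by_cases hkj : k = j <;> simp_all
    · convert Set.ncard_pair hij
      ext k
      by_cases hki : k = i <;> by_cases hkj : k = j <;> simp_all

end booleanCube

theorem graph_separating_polytope_general (n : ℕ)
    (H : Set (Fin n → ℝ))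
    (hH : ∀ x ∈ H, x ∈ booleanCube n ∧ {i | x i = 1}.ncard = 2)
    (N : Fin n → Set (Fin n))
    (hN : ∀ i, N i = {j | i ≠ j ∧ (Pi.single i 1 + Pi.single j 1 : Fin n → ℝ) ∈ H})
    (R : Set (Fin n → ℝ))
    (hR : R = {x | (∀ i, 0 ≤ x i) ∧ (∑ i, x i = 2) ∧
      ∀ i, x i ≤ ∑ j, (N i).indicator x j}) :
    R ⊆ Set.univ.pi (fun _ => Set.Icc (0 : ℝ) 1) ∧ R ∩ booleanCube n = H := by
  subst hR
  have hN_irrefl : ∀ i, i ∉ N i := fun i => by simp [hN]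
  have hN_iff {i j : Fin n} (hij : i ≠ j) :
      j ∈ N i ∧ i ∈ N j ↔ (Pi.single i 1 + Pi.single j 1 : Fin n → ℝ) ∈ H := by
    simp [hN, hij, hij.symm, add_comm]
  refine ⟨fun x ⟨hx0, hx2, hxN⟩ i _ => ⟨hx0 i, ?_⟩,
    Set.ext fun x => ⟨?_, fun hx => ?_⟩⟩
  · linarith [hxN i, add_sum_indicator_le_sum (x := x) hx0 (hN_irrefl i)]
  · rintro ⟨⟨-, hx2, hxN⟩, hx⟩
    obtain ⟨i, j, hij, rfl⟩ := booleanCube.ncard_eq_two_iff.1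
      ⟨hx, by exact_mod_cast (booleanCube.sum_eq_ncard hx).symm.trans hx2⟩
    exact (hN_iff hij).1 ((single_add_single_le_sum_indicator_iff hN_irrefl hij).1 hxN)
  · obtain ⟨hb, hcard⟩ := hH x hx
    obtain ⟨i, j, hij, rfl⟩ := booleanCube.ncard_eq_two_iff.1 ⟨hb, hcard⟩
    have hx2 : ∑ k, (Pi.single i 1 + Pi.single j 1 : Fin n → ℝ) k = 2 := by
      rw [booleanCube.sum_eq_ncard hb, hcard]; norm_num
    refine ⟨⟨booleanCube.nonneg hb, hx2, ?_⟩, hb⟩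
    exact (single_add_single_le_sum_indicator_iff hN_irrefl hij).2 ((hN_iff hij).2 hx)

/-- For a set `H` of Boolean vectors of Hamming weight two (the edges of a graph),
the polytope `R_H` defined by `2n` inequalities and one equation satisfies
`R_H ⊆ [0,1]^n` and `R_H ∩ {0,1}^n = H`. -/
theorem graph_separating_polytope (n : ℕ) (hn : 1 ≤ n)
    (H : Set (Fin n → ℝ))
    (hH : ∀ x ∈ H, x ∈ booleanCube n ∧ {i | x i = 1}.ncard = 2)
    (N : Fin n → Set (Fin n))
    (hN : ∀ i, N i = {j | i ≠ j ∧ (Pi.single i 1 + Pi.single j 1 : Fin n → ℝ) ∈ H})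
    (R : Set (Fin n → ℝ))
    (hR : R = {x | (∀ i, 0 ≤ x i) ∧ (∑ i, x i = 2) ∧
      ∀ i, x i ≤ ∑ j, (N i).indicator x j}) :
    R ⊆ Set.univ.pi (fun _ => Set.Icc (0 : ℝ) 1) ∧ R ∩ booleanCube n = H :=
  graph_separating_polytope_general n H hH N hN R hR
end

section
/- There is a constant C such that for every n ≥ 1 and every subset A of the Boolean cube {0,1}^n, there exist a dimension m, a bounded set Q ⊆ ℝ^m cut out by at most ⌈C · 2^n / n⌉ closed halfspaces, and an affine map π : ℝ^m → ℝ^n with π(Q) equal to the convex hull of A. -/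
/-!
Split the coordinates into a block `s` of size `n - t` and its complement of size `t`, and write
each `x ∈ A` as `σ + w` with `σ` supported on `s` and `w` on `sᶜ`. Grouping the `σ` by their fibre
`F = {w | σ + w ∈ A}` writes `A` as a union of at most `2 ^ 2 ^ t` Minkowski sums `S_F + F`, where
the `S_F` partition the at most `2 ^ (n - t)` occurring `σ`. Balas' extended formulation of the
convex hull of a union, applied to `conv S_F + conv F` with separate weights on `S_F` and on `F`
of equal total mass, has one nonnegativity constraint per point of some `S_F` or `F` and two
equations per block, hence `O(2 ^ (n - t) + 2 ^ 2 ^ t * 2 ^ t)` facets. For `t = log₂ n - 2`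
this is `O(2 ^ n / n)`.
-/

open Finset Bornology
open scoped Pointwise

lemma cutOutBy_setOf_forall_le {m : ℕ} {K : Type*} [Fintype K]
    (f : K → Module.Dual ℝ (Fin m → ℝ)) (b : K → ℝ) :
    CutOutBy {x | ∀ k, f k x ≤ b k} (Fintype.card K) := by
  let e := Fintype.equivFin K
  refine ⟨fun i j => f (e.symm i) fun j' => if j = j' then 1 else 0, fun i => b (e.symm i), ?_⟩
  ext x
  simp only [Set.mem_ofPred_eq, e.symm.forall_congr_left]
  refine forall_congr' fun k => ?_
  rw [LinearMap.pi_apply_eq_sum_univ (f k) x]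
  simp [mul_comm]

lemma exists_cutOutBy_image_eq_s7 {J K E : Type*} [Fintype J] [Fintype K] [AddCommGroup E]
    [Module ℝ E] {f : K → Module.Dual ℝ (J → ℝ)} {b : K → ℝ}
    (hbdd : IsBounded {y | ∀ k, f k y ≤ b k}) (π : (J → ℝ) →ₗ[ℝ] E) :
    ∃ (Q : Set (Fin (Fintype.card J) → ℝ)) (π' : (Fin (Fintype.card J) → ℝ) →ᵃ[ℝ] E),
      IsBounded Q ∧ CutOutBy Q (Fintype.card K) ∧ π' '' Q = π '' {y | ∀ k, f k y ≤ b k} := by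
  let R := LinearEquiv.funCongrLeft ℝ ℝ (Fintype.equivFin J)
  refine ⟨R ⁻¹' {y | ∀ k, f k y ≤ b k}, (π ∘ₗ R.toLinearMap).toAffineMap, ?_, ?_, ?_⟩
  · rw [← R.image_symm_eq_preimage]
    exact (LinearMap.toContinuousLinearMap R.symm.toLinearMap).lipschitz.isBounded_image hbdd
  · exact cutOutBy_setOf_forall_le (fun k => f k ∘ₗ R.toLinearMap) b
  · rw [LinearMap.coe_toAffineMap, LinearMap.coe_comp, Set.image_comp]
    exact congrArg _ (Set.image_preimage_eq _ R.surjective)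

lemma sum_sum_mul_div_self {α β : Type*} [Fintype α] [Fintype β] {s : α → ℝ} {t : β → ℝ}
    (hst : ∑ a, s a = ∑ b, t b) : ∑ a, ∑ b, s a * t b / ∑ a, s a = ∑ a, s a := by
  simp_rw [← sum_div, ← sum_mul_sum, ← hst, mul_self_div_self]

lemma sum_sum_mul_div_smul_add {E α β : Type*} [AddCommGroup E] [Module ℝ E] [Fintype α] [Fintype β]
    {s : α → ℝ} {t : β → ℝ} (hs : 0 ≤ s) (ht : 0 ≤ t) (hst : ∑ a, s a = ∑ b, t b)
    (x : α → E) (z : β → E) :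
    ∑ a, ∑ b, (s a * t b / ∑ a, s a) • (x a + z b) = ∑ a, s a • x a + ∑ b, t b • z b := by
  have hs0 : ∀ a, ∑ a, s a = 0 → s a = 0 := fun a h =>
    congrFun ((Fintype.sum_eq_zero_iff_of_nonneg hs).1 h) a
  have ht0 : ∀ b, ∑ b, t b = 0 → t b = 0 := fun b h =>
    congrFun ((Fintype.sum_eq_zero_iff_of_nonneg ht).1 h) b
  simp only [smul_add, sum_add_distrib]
  congr 1
  · refine sum_congr rfl fun a _ => ?_
    rw [← sum_smul, ← sum_div, ← mul_sum, ← hst, mul_div_cancel_of_imp (hs0 a)]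
  · rw [sum_comm]
    refine sum_congr rfl fun b _ => ?_
    rw [← sum_smul, ← sum_div, ← sum_mul, hst, mul_div_cancel_left_of_imp (ht0 b)]

section Balas

variable {ι : Type*} (κ δ : ι → Type*) [∀ i, Fintype (κ i)] [∀ i, Fintype (δ i)]

abbrev BalasIndex := (Σ i, κ i) ⊕ (Σ i, δ i)

def leftMass (i : ι) : Module.Dual ℝ (BalasIndex κ δ → ℝ) :=
  ∑ a : κ i, LinearMap.proj (Sum.inl ⟨i, a⟩)

def rightMass (i : ι) : Module.Dual ℝ (BalasIndex κ δ → ℝ) :=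
  ∑ b : δ i, LinearMap.proj (Sum.inr ⟨i, b⟩)

variable [Fintype ι]

def balasIneq : BalasIndex κ δ ⊕ (ι ⊕ ι) ⊕ Bool → Module.Dual ℝ (BalasIndex κ δ → ℝ)
  | .inl j => -LinearMap.proj j
  | .inr (.inl (.inl i)) => leftMass κ δ i - rightMass κ δ i
  | .inr (.inl (.inr i)) => rightMass κ δ i - leftMass κ δ i
  | .inr (.inr true) => -∑ i, leftMass κ δ i
  | .inr (.inr false) => ∑ i, leftMass κ δ i

def balasRhs : BalasIndex κ δ ⊕ (ι ⊕ ι) ⊕ Bool → ℝ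
  | .inr (.inr true) => -1
  | .inr (.inr false) => 1
  | _ => 0

def balasPolytope : Set (BalasIndex κ δ → ℝ) :=
  {y | ∀ c, balasIneq κ δ c y ≤ balasRhs κ δ c}

lemma card_balasConstraints :
    Fintype.card (BalasIndex κ δ ⊕ (ι ⊕ ι) ⊕ Bool) =
      ∑ i, Fintype.card (κ i) + ∑ i, Fintype.card (δ i) + 2 * Fintype.card ι + 2 := by
  simp only [Fintype.card_sum, Fintype.card_sigma, Fintype.card_bool]
  ring

lemma mem_balasPolytope {y : BalasIndex κ δ → ℝ} :
    y ∈ balasPolytope κ δ ↔ (∀ j, 0 ≤ y j) ∧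
      (∀ i, ∑ a : κ i, y (.inl ⟨i, a⟩) = ∑ b : δ i, y (.inr ⟨i, b⟩)) ∧
      ∑ i, ∑ a : κ i, y (.inl ⟨i, a⟩) = 1 := by
  simp only [balasPolytope, Set.mem_ofPred_eq, Sum.forall, Bool.forall_bool, balasIneq, balasRhs,
    leftMass, rightMass, LinearMap.neg_apply, LinearMap.sub_apply, LinearMap.sum_apply,
    LinearMap.proj_apply, neg_nonpos, sub_nonpos, neg_le_neg_iff, ← forall_and, ← le_antisymm_iff]

lemma convex_balasPolytope : Convex ℝ (balasPolytope κ δ) := by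
  simp only [balasPolytope, Set.ofPred_forall]
  exact convex_iInter fun c => convex_halfSpace_le (balasIneq κ δ c).isLinear _

lemma isBounded_balasPolytope : IsBounded (balasPolytope κ δ) := by
  refine (Metric.isBounded_Icc (0 : BalasIndex κ δ → ℝ) 1).subset fun y hy => ?_
  obtain ⟨hy0, hbal, htot⟩ := (mem_balasPolytope κ δ).1 hy
  have hmass : ∀ i, ∑ a : κ i, y (.inl ⟨i, a⟩) ≤ 1 := fun i =>
    htot ▸ single_le_sum (f := fun i => ∑ a : κ i, y (.inl ⟨i, a⟩))
      (fun i _ => sum_nonneg fun a _ => hy0 _) (mem_univ i)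
  refine ⟨hy0, fun j => ?_⟩
  rcases j with ⟨i, a⟩ | ⟨i, b⟩
  · exact (single_le_sum (fun a _ => hy0 (.inl ⟨i, a⟩)) (mem_univ a)).trans (hmass i)
  · exact (single_le_sum (fun b _ => hy0 (.inr ⟨i, b⟩)) (mem_univ b)).trans (hbal i ▸ hmass i)

end Balas

section Projection

variable {E : Type*} [AddCommGroup E] [Module ℝ E] {ι : Type*} [Fintype ι] {κ δ : ι → Type*}
  [∀ i, Fintype (κ i)] [∀ i, Fintype (δ i)] (u : ∀ i, κ i → E) (v : ∀ i, δ i → E)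

def balasProj : (BalasIndex κ δ → ℝ) →ₗ[ℝ] E :=
  Fintype.linearCombination ℝ (Sum.elim (fun p => u p.1 p.2) (fun p => v p.1 p.2))

lemma balasProj_mem_convexHull {y : BalasIndex κ δ → ℝ} (hy : y ∈ balasPolytope κ δ) :
    balasProj u v y ∈ convexHull ℝ (⋃ i, Set.range (u i) + Set.range (v i)) := by
  obtain ⟨hy0, hbal, htot⟩ := (mem_balasPolytope κ δ).1 hy
  let mass i := ∑ a : κ i, y (.inl ⟨i, a⟩)
  -- At `mass i = 0` all weights of block `i` vanish, so the junk value of `/ 0` is harmless.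
  let w (p : Σ i, κ i × δ i) := y (.inl ⟨p.1, p.2.1⟩) * y (.inr ⟨p.1, p.2.2⟩) / mass p.1
  have hproj : balasProj u v y = ∑ p, w p • (u p.1 p.2.1 + v p.1 p.2.2) := by
    simp only [w, mass, Fintype.sum_sigma, Fintype.sum_prod_type]
    rw [Fintype.sum_congr _ _ fun i => sum_sum_mul_div_smul_add (fun a => hy0 _) (fun b => hy0 _)
      (hbal i) (u i) (v i)]
    simp [balasProj, Fintype.linearCombination_apply, Fintype.sum_sum_type, Fintype.sum_sigma,
      sum_add_distrib]
  have hw : ∑ p, w p = 1 := by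
    simp only [w, mass, Fintype.sum_sigma, Fintype.sum_prod_type]
    rw [← htot]
    exact Fintype.sum_congr _ _ fun i => sum_sum_mul_div_self (hbal i)
  rw [hproj]
  refine (convex_convexHull ℝ _).sum_mem
    (fun p _ => div_nonneg (mul_nonneg (hy0 _) (hy0 _)) (sum_nonneg fun a _ => hy0 _)) hw
    fun p _ => subset_convexHull ℝ _ (Set.mem_iUnion.2 ⟨p.1, Set.add_mem_add ⟨_, rfl⟩ ⟨_, rfl⟩⟩)

lemma add_mem_image_balasProj (i : ι) (a : κ i) (b : δ i) :
    u i a + v i b ∈ balasProj u v '' balasPolytope κ δ := by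
  classical
  refine ⟨Pi.single (.inl ⟨i, a⟩) 1 + Pi.single (.inr ⟨i, b⟩) 1, (mem_balasPolytope κ δ).2
    ⟨fun j => ?_, fun i' => ?_, ?_⟩, ?_⟩
  · simp only [Pi.add_apply, Pi.single_apply]
    positivity
  · by_cases h : i' = i
    · subst h
      simp [Pi.single_apply]
    · simp [h]
  · rw [Fintype.sum_eq_single i fun i' h => ?_]
    · simp [Pi.single_apply]
    · simp [h]
  · simp [balasProj, Fintype.linearCombination_apply, add_smul, Pi.single_apply]

lemma image_balasProj :
    balasProj u v '' balasPolytope κ δ = convexHull ℝ (⋃ i, Set.range (u i) + Set.range (v i)) := by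
  refine subset_antisymm (Set.image_subset_iff.2 fun y hy => balasProj_mem_convexHull u v hy)
    (convexHull_min ?_ ((convex_balasPolytope κ δ).linear_image _))
  simp only [Set.iUnion_subset_iff]
  rintro i _ ⟨_, ⟨a, rfl⟩, _, ⟨b, rfl⟩, rfl⟩
  exact add_mem_image_balasProj u v i a b

end Projection

section Fibers

variable {E : Type*} [DecidableEq E] (A : Finset E) (f g : E → E)

def fiber (σ : E) : Finset E := {x ∈ A | f x = σ}.image g

def fibers : Finset (Finset E) := (A.image f).image (fiber A f g)

def baseWithFiber (F : Finset E) : Finset E := {σ ∈ A.image f | fiber A f g σ = F}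

lemma sum_card_baseWithFiber : ∑ F ∈ fibers A f g, #(baseWithFiber A f g F) = #(A.image f) :=
  (card_eq_sum_card_fiberwise (f := fiber A f g) fun _ hσ => mem_image_of_mem _ hσ).symm

lemma fibers_subset_powerset : fibers A f g ⊆ (A.image g).powerset := by
  intro F hF
  obtain ⟨σ, -, rfl⟩ := mem_image.1 hF
  exact mem_powerset.2 (image_subset_image (filter_subset _ A))

lemma card_fibers_le : #(fibers A f g) ≤ 2 ^ #(A.image g) :=
  (card_le_card (fibers_subset_powerset A f g)).trans_eq (card_powerset _)

lemma sum_card_fibers_le : ∑ F ∈ fibers A f g, #F ≤ 2 ^ #(A.image g) * #(A.image g) := by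
  refine (sum_le_card_nsmul _ _ _ fun F hF =>
    card_le_card (mem_powerset.1 (fibers_subset_powerset A f g hF))).trans ?_
  rw [smul_eq_mul]
  gcongr
  exact card_fibers_le A f g

lemma mem_fiber {σ w : E} : w ∈ fiber A f g σ ↔ ∃ x ∈ A, f x = σ ∧ g x = w := by
  simp [fiber, and_assoc]

lemma iUnion_baseWithFiber_add [AddCommMonoid E] (hfg : ∀ x, f x + g x = x) :
    ⋃ F : fibers A f g, (baseWithFiber A f g F : Set E) + (F : Set E) = A := by
  ext x
  simp only [Set.mem_iUnion, Set.mem_add, mem_coe, Subtype.exists, exists_prop, baseWithFiber,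
    mem_filter]
  constructor
  · rintro ⟨F, -, σ, ⟨-, rfl⟩, w, hw, rfl⟩
    obtain ⟨x, hx, rfl, rfl⟩ := (mem_fiber A f g).1 hw
    rwa [hfg]
  · intro hx
    exact ⟨fiber A f g (f x), mem_image_of_mem _ (mem_image_of_mem _ hx), f x,
      ⟨mem_image_of_mem _ hx, rfl⟩, g x, (mem_fiber A f g).2 ⟨x, hx, rfl, rfl⟩, hfg x⟩

end Fibers

lemma exists_cutOutBy_image_eq_convexHull_iUnion_add {E ι : Type*} [AddCommGroup E] [Module ℝ E]
    [Fintype ι] (U V : ι → Finset E) :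
    ∃ (m k : ℕ) (Q : Set (Fin m → ℝ)) (π : (Fin m → ℝ) →ᵃ[ℝ] E),
      k = ∑ i, #(U i) + ∑ i, #(V i) + 2 * Fintype.card ι + 2 ∧
      IsBounded Q ∧ CutOutBy Q k ∧ π '' Q = convexHull ℝ (⋃ i, (U i : Set E) + (V i : Set E)) := by
  obtain ⟨Q, π, hQ, hcut, himg⟩ :=
    exists_cutOutBy_image_eq_s7 (f := balasIneq (fun i => U i) fun i => V i) (b := balasRhs _ _)
      (isBounded_balasPolytope _ _) (balasProj (fun _ a => a.1) fun _ b => b.1)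
  refine ⟨_, _, Q, π, ?_, hQ, hcut, ?_⟩
  · rw [card_balasConstraints]
    simp
  · rw [himg]
    refine (image_balasProj (fun i (a : U i) => a.1) fun i (b : V i) => b.1).trans ?_
    simp

lemma exists_cutOutBy_image_eq_convexHull {E : Type*} [AddCommGroup E] [Module ℝ E] [DecidableEq E]
    (A : Finset E) (f g : E → E) (hfg : ∀ x, f x + g x = x) :
    ∃ (m k : ℕ) (Q : Set (Fin m → ℝ)) (π : (Fin m → ℝ) →ᵃ[ℝ] E),
      k ≤ #(A.image f) + 2 ^ #(A.image g) * (#(A.image g) + 2) + 2 ∧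
      IsBounded Q ∧ CutOutBy Q k ∧ π '' Q = convexHull ℝ A := by
  obtain ⟨m, k, Q, π, rfl, hQ, hcut, himg⟩ := exists_cutOutBy_image_eq_convexHull_iUnion_add
    (fun F : fibers A f g => baseWithFiber A f g F) (fun F => F)
  refine ⟨m, _, Q, π, ?_, hQ, hcut, himg.trans (by rw [iUnion_baseWithFiber_add A f g hfg])⟩
  rw [sum_coe_sort (fibers A f g) fun F => #(baseWithFiber A f g F),
    sum_coe_sort (fibers A f g) fun F => #F, sum_card_baseWithFiber, Fintype.card_coe]
  have hsum := sum_card_fibers_le A f g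
  have hcard := card_fibers_le A f g
  linarith

lemma finite_booleanCube (n : ℕ) : (booleanCube n).Finite := by
  have : booleanCube n = Set.univ.pi fun _ => {0, 1} := by
    ext x
    simp [booleanCube]
  rw [this]
  exact Set.Finite.pi fun _ => Set.toFinite _

lemma card_image_indicator_le {n : ℕ} {A : Finset (Fin n → ℝ)} (hA : ↑A ⊆ booleanCube n)
    (s : Finset (Fin n)) : #(A.image fun x => (s : Set (Fin n)).indicator x) ≤ 2 ^ #s := by
  classical
  refine (card_le_card_of_injOn (fun y => {i ∈ s | y i = 1}) (fun y _ => ?_) ?_).trans_eq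
    (card_powerset s)
  · exact mem_powerset.2 (filter_subset _ s)
  · simp only [coe_image, Set.InjOn, Set.mem_image, mem_coe, forall_exists_index, and_imp]
    rintro _ x hx rfl _ x' hx' rfl h
    funext i
    by_cases hi : i ∈ s
    · have := congrArg (i ∈ ·) h
      simp only [mem_filter, hi, true_and, Set.indicator_of_mem hi] at this ⊢
      rcases hA hx i with h0 | h1 <;> rcases hA hx' i with h0' | h1' <;> simp_all
    · simp [Set.indicator_of_notMem, hi]

lemma exists_cutOutBy_image_eq_convexHull_of_subset_booleanCube {n : ℕ} {A : Set (Fin n → ℝ)}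
    (hA : A ⊆ booleanCube n) (s : Finset (Fin n)) :
    ∃ (m k : ℕ) (Q : Set (Fin m → ℝ)) (π : (Fin m → ℝ) →ᵃ[ℝ] (Fin n → ℝ)),
      k ≤ 2 ^ #s + 2 ^ 2 ^ #sᶜ * (2 ^ #sᶜ + 2) + 2 ∧
      IsBounded Q ∧ CutOutBy Q k ∧ π '' Q = convexHull ℝ A := by
  classical
  lift A to Finset (Fin n → ℝ) using (finite_booleanCube n).subset hA
  obtain ⟨m, k, Q, π, hk, hQ⟩ := exists_cutOutBy_image_eq_convexHull A
    (fun x => (s : Set (Fin n)).indicator x)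
    (fun x => ((sᶜ : Finset (Fin n)) : Set (Fin n)).indicator x)
    fun x => by rw [coe_compl]; exact Set.indicator_self_add_compl _ x
  refine ⟨m, k, Q, π, hk.trans ?_, hQ⟩
  have hbase := card_image_indicator_le hA s
  have hfib := card_image_indicator_le hA sᶜ
  gcongr
  exact one_le_two

lemma two_pow_two_pow_mul_add_le {n t : ℕ} (h : 4 * 2 ^ t ≤ n) :
    2 ^ 2 ^ t * (2 ^ t + 2) + 2 ≤ 2 ^ (n - t) := by
  have ht : t + 1 ≤ 2 ^ t := Nat.lt_two_pow_self
  have h1 : 2 ≤ 2 ^ 2 ^ t := Nat.pow_le_pow_right two_pos Nat.one_le_two_pow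
  calc 2 ^ 2 ^ t * (2 ^ t + 2) + 2 ≤ 2 ^ 2 ^ t * 2 ^ t * 4 := by nlinarith
    _ = 2 ^ (2 ^ t + t + 2) := by ring
    _ ≤ 2 ^ (n - t) := Nat.pow_le_pow_right two_pos (by omega)

lemma exists_le_mul_le_two_pow {n : ℕ} (hn : 1 ≤ n) :
    ∃ t ≤ n, (2 ^ (n - t) + 2 ^ 2 ^ t * (2 ^ t + 2) + 2) * n ≤ 2 ^ (n + 4) := by
  rcases Nat.lt_or_ge n 16 with hn16 | hn16
  · refine ⟨0, Nat.zero_le n, ?_⟩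
    interval_cases n <;> norm_num
  · set l := Nat.log 2 n
    have hl : 4 ≤ l := Nat.le_log_of_pow_le one_lt_two (by omega)
    have hln : 2 ^ l ≤ n := Nat.pow_log_le_self 2 (by omega)
    have hnl : n < 2 ^ (l + 1) := Nat.lt_pow_succ_log_self one_lt_two n
    have hll : l < 2 ^ l := Nat.lt_two_pow_self
    refine ⟨l - 2, by omega, ?_⟩
    have h4 : 4 * 2 ^ (l - 2) = 2 ^ l := by
      rw [← pow_sub_mul_pow 2 (show 2 ≤ l by omega)]; ring
    have hsmall := two_pow_two_pow_mul_add_le (n := n) (h4.trans_le hln)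
    calc (2 ^ (n - (l - 2)) + 2 ^ 2 ^ (l - 2) * (2 ^ (l - 2) + 2) + 2) * n
        ≤ (2 * 2 ^ (n - (l - 2))) * 2 ^ (l + 1) := by gcongr; omega
      _ = 2 ^ (n + 4) := by rw [← pow_succ', ← pow_add]; congr 1; omega

/-- Every 0/1-polytope in `ℝ^n` has extension complexity `O(2^n / n)`. -/
theorem zero_one_polytope_xc_upper :
    ∃ C : ℝ, ∀ n : ℕ, 1 ≤ n → ∀ A : Set (Fin n → ℝ), A ⊆ booleanCube n →
      ∃ (m k : ℕ) (Q : Set (Fin m → ℝ)) (π : (Fin m → ℝ) →ᵃ[ℝ] (Fin n → ℝ)),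
        k ≤ ⌈C * 2 ^ n / (n : ℝ)⌉₊ ∧
        Bornology.IsBounded Q ∧
        CutOutBy Q k ∧
        π '' Q = convexHull ℝ A := by
  refine ⟨16, fun n hn A hA => ?_⟩
  obtain ⟨t, htn, hbound⟩ := exists_le_mul_le_two_pow hn
  obtain ⟨s, -, hs⟩ := exists_subset_card_eq (s := (univ : Finset (Fin n))) (n := n - t) (by simp)
  have hsc : #sᶜ = t := by rw [card_compl, hs, Fintype.card_fin]; omega
  obtain ⟨m, k, Q, π, hk, hQ⟩ := exists_cutOutBy_image_eq_convexHull_of_subset_booleanCube hA s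
  rw [hs, hsc] at hk
  refine ⟨m, k, Q, π, ?_, hQ⟩
  have hkn : (k : ℝ) * n ≤ 16 * 2 ^ n :=
    mod_cast (Nat.mul_le_mul_right n hk).trans (hbound.trans_eq (by ring))
  exact_mod_cast ((le_div_iff₀ (by positivity)).2 hkn).trans (Nat.le_ceil _)
end

section
/- Let G be a bipartite graph on vertex set Fin n with parts L and R (so L ∪ R = Fin n, L ∩ R = ∅, and every edge joins L to R), and for i ∈ L let N(i) ⊆ R be its set of neighbours. Define: P_G = conv{e_i + e_j : i adjacent to j in G}; Q_G = {x : Fin n → ℝ | ∀ i ≠ j with i, j non-adjacent, x i + x j ≤ 1}; and R'_G = {x : Fin n → ℝ | (∀ i, 0 ≤ x i) ∧ ∑_{i ∈ L} x i = 1 ∧ ∑_{i ∈ R} x i = 1 ∧ (∀ i ∈ L, x i + ∑_{j ∈ R \ N(i)} x j ≤ 1)}. Then P_G ⊆ R'_G ⊆ Q_G. -/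
/-!
`R'_G` is cut out by linear constraints, hence convex, and each vertex `e_i + e_j` of `P_G`
(with `i ∈ L`, `j ∈ R`) satisfies them: the constraint at `i` reads `1 + 0 ≤ 1` because `j`
is a neighbour of `i`. Conversely, for `x ∈ R'_G` and a non-adjacent pair `i, j`: if both lie
on the same side, `x i + x j` is bounded by that side's sum `1`; if `i ∈ L` and `j ∈ R`, then
`j ∉ N(i)`, so `x j` is one of the terms of the constraint at `i`.
-/

open Finset

namespace SimpleGraph

variable {V : Type*} (G : SimpleGraph V) [DecidableRel G.Adj] (L R : Finset V)

/-- `P_G` -/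
def edgePolytope [DecidableEq V] : Set (V → ℝ) :=
  convexHull ℝ {x | ∃ i j, G.Adj i j ∧ x = (Pi.single i 1 + Pi.single j 1 : V → ℝ)}

/-- `Q_G` -/
def nonEdgePolyhedron : Set (V → ℝ) :=
  {x | ∀ i j, i ≠ j → ¬ G.Adj i j → x i + x j ≤ 1}

/-- `R'_G` -/
def bipartiteSandwich : Set (V → ℝ) :=
  {x | (∀ i, 0 ≤ x i) ∧ (∑ i ∈ L, x i = 1) ∧ (∑ i ∈ R, x i = 1) ∧
    ∀ i ∈ L, x i + ∑ j ∈ R.filter (fun j => ¬ G.Adj i j), x j ≤ 1}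

variable {G L R}

theorem convex_bipartiteSandwich : Convex ℝ (G.bipartiteSandwich L R) := by
  rintro x ⟨hx0, hxL, hxR, hxN⟩ y ⟨hy0, hyL, hyR, hyN⟩ a b ha hb hab
  have hsum (s : Finset V) :
      ∑ k ∈ s, (a • x + b • y) k = a * ∑ k ∈ s, x k + b * ∑ k ∈ s, y k := by
    simp only [Pi.add_apply, Pi.smul_apply, smul_eq_mul, sum_add_distrib, mul_sum]
  refine ⟨fun i => ?_, by rw [hsum, hxL, hyL, mul_one, mul_one, hab],
    by rw [hsum, hxR, hyR, mul_one, mul_one, hab], fun i hi => ?_⟩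
  · simp only [Pi.add_apply, Pi.smul_apply, smul_eq_mul]
    exact add_nonneg (mul_nonneg ha (hx0 i)) (mul_nonneg hb (hy0 i))
  · have hxi := mul_le_mul_of_nonneg_left (hxN i hi) ha
    have hyi := mul_le_mul_of_nonneg_left (hyN i hi) hb
    rw [hsum]
    simp only [Pi.add_apply, Pi.smul_apply, smul_eq_mul] at hxi hyi ⊢
    linarith

theorem single_add_single_mem_bipartiteSandwich [DecidableEq V] (hdisj : Disjoint L R) {i j : V}
    (hij : G.Adj i j) (hi : i ∈ L) (hj : j ∈ R) :
    (Pi.single i 1 + Pi.single j 1 : V → ℝ) ∈ G.bipartiteSandwich L R := by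
  have hsum (s : Finset V) : ∑ k ∈ s, (Pi.single i 1 + Pi.single j 1 : V → ℝ) k =
      (if i ∈ s then 1 else 0) + (if j ∈ s then 1 else 0) := by
    simp only [Pi.add_apply, sum_add_distrib, sum_pi_single']
  have hiR : i ∉ R := Finset.disjoint_left.1 hdisj hi
  have hjL : j ∉ L := Finset.disjoint_right.1 hdisj hj
  refine ⟨Pi.le_def.1 <|
      add_nonneg (Pi.single_nonneg.2 zero_le_one) (Pi.single_nonneg.2 zero_le_one),
    by rw [hsum, if_pos hi, if_neg hjL, add_zero],
    by rw [hsum, if_neg hiR, if_pos hj, zero_add], fun k hk => ?_⟩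
  have hkj : k ≠ j := fun h => Finset.disjoint_left.1 hdisj hk (h ▸ hj)
  rw [hsum, if_neg fun h => hiR (mem_filter.1 h).1, zero_add]
  by_cases hki : k = i
  · subst hki
    simp [hij, hkj]
  · rw [Pi.add_apply, Pi.single_eq_of_ne hki, Pi.single_eq_of_ne hkj, add_zero]
    split_ifs <;> norm_num

theorem edgePolytope_subset_bipartiteSandwich [DecidableEq V] (hdisj : Disjoint L R)
    (hbip : ∀ i j, G.Adj i j → (i ∈ L ∧ j ∈ R) ∨ (i ∈ R ∧ j ∈ L)) :
    G.edgePolytope ⊆ G.bipartiteSandwich L R := by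
  refine convexHull_min ?_ convex_bipartiteSandwich
  rintro _ ⟨i, j, hij, rfl⟩
  rcases hbip i j hij with ⟨hi, hj⟩ | ⟨hi, hj⟩
  · exact single_add_single_mem_bipartiteSandwich hdisj hij hi hj
  · rw [add_comm]
    exact single_add_single_mem_bipartiteSandwich hdisj hij.symm hj hi

theorem add_le_one_of_mem_bipartiteSandwich {x : V → ℝ} (hx : x ∈ G.bipartiteSandwich L R)
    {i j : V} (hi : i ∈ L) (hj : j ∈ R) (hij : ¬ G.Adj i j) : x i + x j ≤ 1 := by
  obtain ⟨hx0, -, -, hxN⟩ := hx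
  have hxj : x j ≤ ∑ k ∈ R.filter (fun k => ¬ G.Adj i k), x k :=
    single_le_sum (fun k _ => hx0 k) (mem_filter.2 ⟨hj, hij⟩)
  linarith [hxN i hi]

theorem bipartiteSandwich_subset_nonEdgePolyhedron (hside : ∀ k, k ∈ L ∨ k ∈ R) :
    G.bipartiteSandwich L R ⊆ G.nonEdgePolyhedron := by
  intro x hx i j hne hij
  have ⟨hx0, hxL, hxR, _⟩ := hx
  rcases hside i with hi | hi <;> rcases hside j with hj | hj
  · exact (add_le_sum (fun k _ => hx0 k) hi hj hne).trans hxL.le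
  · exact add_le_one_of_mem_bipartiteSandwich hx hi hj hij
  · rw [add_comm]
    exact add_le_one_of_mem_bipartiteSandwich hx hj hi (hij ∘ G.adj_symm)
  · exact (add_le_sum (fun k _ => hx0 k) hi hj hne).trans hxR.le

end SimpleGraph

/-- For a bipartite graph `G` on `Fin n` with parts `L` and `R`, the polytope `R'_G`
defined by `O(n)` constraints is sandwiched between the edge polytope `P_G` and the
polyhedron `Q_G` given by the non-edge constraints `x_i + x_j ≤ 1`. -/
theorem bipartite_sandwich_polytope (n : ℕ) (G : SimpleGraph (Fin n))
    [DecidableRel G.Adj] (L R : Finset (Fin n))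
    (hLR : L ∪ R = Finset.univ) (hdisj : Disjoint L R)
    (hbip : ∀ i j, G.Adj i j → (i ∈ L ∧ j ∈ R) ∨ (i ∈ R ∧ j ∈ L))
    (P : Set (Fin n → ℝ))
    (hP : P = convexHull ℝ
      {x | ∃ i j, G.Adj i j ∧ x = (Pi.single i 1 + Pi.single j 1 : Fin n → ℝ)})
    (Q : Set (Fin n → ℝ))
    (hQ : Q = {x | ∀ i j, i ≠ j → ¬ G.Adj i j → x i + x j ≤ 1})
    (R' : Set (Fin n → ℝ))
    (hR' : R' = {x | (∀ i, 0 ≤ x i) ∧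
      (∑ i ∈ L, x i = 1) ∧ (∑ i ∈ R, x i = 1) ∧
      ∀ i ∈ L, x i + ∑ j ∈ R.filter (fun j => ¬ G.Adj i j), x j ≤ 1}) :
    P ⊆ R' ∧ R' ⊆ Q := by
  subst hP hQ hR'
  exact ⟨G.edgePolytope_subset_bipartiteSandwich hdisj hbip,
    G.bipartiteSandwich_subset_nonEdgePolyhedron fun k => mem_union.1 (hLR ▸ mem_univ k)⟩
end

section
/- Let G be a bipartite graph on n vertices with parts L and R (every edge joins L to R). Let E be the set of edges of G and Ē the set of non-edges (unordered pairs of distinct vertices that are not adjacent). Then the set D = {(e, f) ∈ E × Ē : e and f share no vertex} can be partitioned into at most 2n subsets, each of which is a Cartesian product C × C' with C ⊆ E and C' ⊆ Ē. -/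
/-!
Write an edge as `ab` with `a ∈ L`, `b ∈ R`, and let `f` be a non-edge disjoint from it. If
`f ⊆ R`, the pair is filed under `b`. Otherwise, if some `w ∈ f` is adjacent to `a`, then `w ∈ R`
and `f = cw` with `c ∉ R`, so `w` is determined by `f` alone, and the pair is filed under `w`;
failing that, it is filed under `a`. Each of these classes is a product of a set of edges and a set
of non-edges, and there are `|L| + 2|R| ≤ 2n` of them.
-/

namespace Set

variable {α β ι κ : Type*}

structure IsRectanglePartition (D : Set (α × β)) (A : ι → Set α) (B : ι → Set β) : Prop where
  iUnion_prod_eq : ⋃ i, A i ×ˢ B i = D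
  pairwise_disjoint : Pairwise fun i j => Disjoint (A i ×ˢ B i) (A j ×ˢ B j)

theorem IsRectanglePartition.comp_equiv {D : Set (α × β)} {A : ι → Set α} {B : ι → Set β}
    (h : IsRectanglePartition D A B) (e : κ ≃ ι) : IsRectanglePartition D (A ∘ e) (B ∘ e) where
  iUnion_prod_eq := by
    rw [← h.iUnion_prod_eq, ← e.surjective.iUnion_comp]
    rfl
  pairwise_disjoint := h.pairwise_disjoint.comp_of_injective e.injective

theorem nat_card_sum_sum_le_two_mul [Finite α] {L R : Set α} (hLR : Disjoint L R) :
    Nat.card (L ⊕ R ⊕ R) ≤ 2 * Nat.card α := by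
  have hL := (L ∪ R).ncard_le_card
  have hR := R.ncard_le_card
  rw [ncard_union_eq hLR] at hL
  simp only [Nat.card_sum, Nat.card_coe_set_eq]
  omega

end Set

namespace SimpleGraph

variable {V : Type*} {G : SimpleGraph V} {L R : Set V} {e : Sym2 V} {v w : V}

theorem edgeSet_compl (G : SimpleGraph V) : Gᶜ.edgeSet = {s | ¬ s.IsDiag ∧ s ∉ G.edgeSet} := by
  ext s
  induction s using Sym2.ind
  simp [compl_adj]

variable (G) in
def disjointEdgeNonEdgePairs : Set (Sym2 V × Sym2 V) :=
  {p | p.1 ∈ G.edgeSet ∧ p.2 ∈ Gᶜ.edgeSet ∧ ∀ v ∈ p.1, v ∉ p.2}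

theorem IsBipartiteWith.exists_eq_mk_of_mem_edgeSet (hG : G.IsBipartiteWith L R)
    (he : e ∈ G.edgeSet) : ∃ a ∈ L, ∃ b ∈ R, G.Adj a b ∧ e = s(a, b) := by
  induction e using Sym2.ind with
  | _ a b =>
    rcases hG.mem_of_adj he with ⟨ha, hb⟩ | ⟨ha, hb⟩
    · exact ⟨a, ha, b, hb, he, rfl⟩
    · exact ⟨b, hb, a, ha, he.symm, Sym2.eq_swap⟩

theorem IsBipartiteWith.eq_of_mem_incidenceSet (hG : G.IsBipartiteWith L R) (hv : v ∈ L)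
    (hw : w ∈ L) (hev : e ∈ G.incidenceSet v) (hew : e ∈ G.incidenceSet w) : v = w := by
  by_contra hne
  obtain rfl := (Sym2.mem_and_mem_iff hne).1 ⟨hev.2, hew.2⟩
  exact hG.disjoint.notMem_of_mem_left hw (hG.mem_of_mem_adj hv hev.1)

variable (G L R) in
def bipartiteRectangle : L ⊕ R ⊕ R → Set (Sym2 V) × Set (Sym2 V)
  | .inl v => (G.incidenceSet v,
      {f ∈ Gᶜ.edgeSet | v.1 ∉ f ∧ (∃ x ∈ f, x ∉ R) ∧ ∀ x ∈ f, ¬ G.Adj v x})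
  | .inr (.inl v) => (G.incidenceSet v, {f ∈ Gᶜ.edgeSet | v.1 ∉ f ∧ ∀ x ∈ f, x ∈ R})
  | .inr (.inr v) => ({e ∈ G.edgeSet | v.1 ∉ e ∧ ∃ x ∈ e, G.Adj x v},
      {f ∈ Gᶜ.edgeSet | v.1 ∈ f ∧ ∃ x ∈ f, x ∉ R})

theorem bipartiteRectangle_subset (i : L ⊕ R ⊕ R) :
    (G.bipartiteRectangle L R i).1 ⊆ G.edgeSet ∧ (G.bipartiteRectangle L R i).2 ⊆ Gᶜ.edgeSet := by
  rcases i with v | v | v <;> exact ⟨fun _ h => h.1, fun _ h => h.1⟩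

theorem IsBipartiteWith.bipartiteRectangle_prod_subset (hG : G.IsBipartiteWith L R)
    (i : L ⊕ R ⊕ R) :
    (G.bipartiteRectangle L R i).1 ×ˢ (G.bipartiteRectangle L R i).2 ⊆
      G.disjointEdgeNonEdgePairs := by
  rintro ⟨e, f⟩ ⟨he, hf⟩
  refine ⟨(bipartiteRectangle_subset i).1 he, (bipartiteRectangle_subset i).2 hf, ?_⟩
  rcases i with ⟨v, hv⟩ | ⟨v, hv⟩ | ⟨v, hv⟩
  · obtain ⟨⟨hadj, hve⟩, ⟨-, hvf, -, hfN⟩⟩ := And.intro he hf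
    obtain ⟨w, rfl⟩ := Sym2.mem_iff_exists.1 hve
    intro x hx hxf
    rcases Sym2.mem_iff.1 hx with rfl | rfl
    · exact hvf hxf
    · exact hfN x hxf hadj
  · obtain ⟨⟨hadj, hve⟩, ⟨-, hvf, hfR⟩⟩ := And.intro he hf
    obtain ⟨w, rfl⟩ := Sym2.mem_iff_exists.1 hve
    have hwR : w ∉ R := hG.disjoint.notMem_of_mem_left (hG.mem_of_mem_adj' hv hadj.symm)
    intro x hx hxf
    rcases Sym2.mem_iff.1 hx with rfl | rfl
    · exact hvf hxf
    · exact hwR (hfR x hxf)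
  · obtain ⟨⟨hadj, hve, x, hxe, hxv⟩, ⟨hfc, hvf, c, hcf, hcR⟩⟩ := And.intro he hf
    have hcv : c ≠ v := fun h => hcR (h ▸ hv)
    obtain rfl := (Sym2.mem_and_mem_iff hcv).1 ⟨hcf, hvf⟩
    obtain ⟨y, rfl⟩ := Sym2.mem_iff_exists.1 hxe
    have hyR : y ∈ R := hG.mem_of_mem_adj (hG.mem_of_mem_adj' hv hxv) hadj
    intro z hz hzf
    rcases Sym2.mem_iff.1 hz with rfl | rfl <;> rcases Sym2.mem_iff.1 hzf with rfl | rfl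
    · exact ((compl_adj G _ _).1 hfc).2 hxv
    · exact hve hz
    · exact hcR hyR
    · exact hve hz

theorem IsBipartiteWith.subset_iUnion_bipartiteRectangle (hG : G.IsBipartiteWith L R) :
    G.disjointEdgeNonEdgePairs ⊆
      ⋃ i, (G.bipartiteRectangle L R i).1 ×ˢ (G.bipartiteRectangle L R i).2 := by
  rintro ⟨e, f⟩ ⟨he, hf, hef⟩
  obtain ⟨a, ha, b, hb, hab, rfl⟩ := hG.exists_eq_mk_of_mem_edgeSet he
  have hae := Sym2.mem_mk_left a b
  have hbe := Sym2.mem_mk_right a b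
  simp only [Set.mem_iUnion, Set.mem_prod]
  by_cases hfR : ∀ x ∈ f, x ∈ R
  · exact ⟨.inr (.inl ⟨b, hb⟩), ⟨he, hbe⟩, hf, hef b hbe, hfR⟩
  push Not at hfR
  by_cases haf : ∃ w ∈ f, G.Adj a w
  · obtain ⟨w, hwf, haw⟩ := haf
    exact ⟨.inr (.inr ⟨w, hG.mem_of_mem_adj ha haw⟩),
      ⟨he, fun hwe => hef w hwe hwf, a, hae, haw⟩, hf, hwf, hfR⟩
  push Not at haf
  exact ⟨.inl ⟨a, ha⟩, ⟨he, hae⟩, hf, hef a hae, hfR, haf⟩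

theorem IsBipartiteWith.disjoint_bipartiteRectangle_inl_inr_inr (hG : G.IsBipartiteWith L R)
    (v : L) (w : R) :
    Disjoint ((G.bipartiteRectangle L R (.inl v)).1 ×ˢ (G.bipartiteRectangle L R (.inl v)).2)
      ((G.bipartiteRectangle L R (.inr (.inr w))).1 ×ˢ
        (G.bipartiteRectangle L R (.inr (.inr w))).2) := by
  rw [Set.disjoint_left]
  rintro ⟨e, f⟩ ⟨⟨he, hve⟩, -, -, -, hfN⟩ ⟨⟨-, -, x, hxe, hxw⟩, -, hwf, -⟩
  have hvx : v.1 = x :=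
    hG.eq_of_mem_incidenceSet v.2 (hG.mem_of_mem_adj' w.2 hxw) ⟨he, hve⟩ ⟨he, hxe⟩
  exact hfN w hwf (hvx ▸ hxw)

theorem IsBipartiteWith.pairwise_disjoint_bipartiteRectangle (hG : G.IsBipartiteWith L R) :
    Pairwise fun i j =>
      Disjoint ((G.bipartiteRectangle L R i).1 ×ˢ (G.bipartiteRectangle L R i).2)
        ((G.bipartiteRectangle L R j).1 ×ˢ (G.bipartiteRectangle L R j).2) := by
  have hinl_inrl : ∀ (v : L) (w : R), Disjoint (G.bipartiteRectangle L R (.inl v)).2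
      (G.bipartiteRectangle L R (.inr (.inl w))).2 := fun _ _ =>
    Set.disjoint_left.2 fun _ ⟨_, _, ⟨x, hxf, hxR⟩, _⟩ ⟨_, _, hfR⟩ => hxR (hfR x hxf)
  have hinrl_inrr : ∀ v w : R, Disjoint (G.bipartiteRectangle L R (.inr (.inl v))).2
      (G.bipartiteRectangle L R (.inr (.inr w))).2 := fun _ _ =>
    Set.disjoint_left.2 fun _ ⟨_, _, hfR⟩ ⟨_, _, x, hxf, hxR⟩ => hxR (hfR x hxf)
  rintro (v | v | v) (w | w | w) hne
  · refine Set.disjoint_prod.2 (.inl (Set.disjoint_left.2 fun e hv hw => hne ?_))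
    exact congrArg _ (Subtype.ext (hG.eq_of_mem_incidenceSet v.2 w.2 hv hw))
  · exact Set.disjoint_prod.2 (.inr (hinl_inrl v w))
  · exact hG.disjoint_bipartiteRectangle_inl_inr_inr v w
  · exact Set.disjoint_prod.2 (.inr (hinl_inrl w v).symm)
  · refine Set.disjoint_prod.2 (.inl (Set.disjoint_left.2 fun e hv hw => hne ?_))
    exact congrArg _ (congrArg _ (Subtype.ext (hG.symm.eq_of_mem_incidenceSet v.2 w.2 hv hw)))
  · exact Set.disjoint_prod.2 (.inr (hinrl_inrr v w))
  · exact (hG.disjoint_bipartiteRectangle_inl_inr_inr w v).symm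
  · exact Set.disjoint_prod.2 (.inr (hinrl_inrr w v).symm)
  · refine Set.disjoint_prod.2 (.inr (Set.disjoint_left.2 ?_))
    rintro f ⟨-, hvf, x, hxf, hxR⟩ ⟨-, hwf, -⟩
    have hvw : v.1 ≠ w := fun h => hne (congrArg _ (congrArg _ (Subtype.ext h)))
    obtain rfl := (Sym2.mem_and_mem_iff hvw).1 ⟨hvf, hwf⟩
    rcases Sym2.mem_iff.1 hxf with rfl | rfl
    · exact hxR v.2
    · exact hxR w.2

theorem IsBipartiteWith.isRectanglePartition_bipartiteRectangle (hG : G.IsBipartiteWith L R) :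
    G.disjointEdgeNonEdgePairs.IsRectanglePartition (fun i => (G.bipartiteRectangle L R i).1)
      (fun i => (G.bipartiteRectangle L R i).2) where
  iUnion_prod_eq := (Set.iUnion_subset hG.bipartiteRectangle_prod_subset).antisymm
    hG.subset_iUnion_bipartiteRectangle
  pairwise_disjoint := hG.pairwise_disjoint_bipartiteRectangle

end SimpleGraph

open SimpleGraph in
theorem bipartite_edge_nonedge_partition_general (n : ℕ) (G : SimpleGraph (Fin n))
    (L R : Set (Fin n)) (hdisj : Disjoint L R)
    (hbip : ∀ i j, G.Adj i j → (i ∈ L ∧ j ∈ R) ∨ (i ∈ R ∧ j ∈ L))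
    (nonEdges : Set (Sym2 (Fin n)))
    (hnonEdges : nonEdges = {s | ¬ s.IsDiag ∧ s ∉ G.edgeSet})
    (D : Set (Sym2 (Fin n) × Sym2 (Fin n)))
    (hD : D = {p | p.1 ∈ G.edgeSet ∧ p.2 ∈ nonEdges ∧ ∀ v, v ∈ p.1 → ¬ v ∈ p.2}) :
    ∃ (k : ℕ) (C : Fin k → Set (Sym2 (Fin n))) (C' : Fin k → Set (Sym2 (Fin n))),
      k ≤ 2 * n ∧
      (∀ i, C i ⊆ G.edgeSet ∧ C' i ⊆ nonEdges) ∧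
      (⋃ i, C i ×ˢ C' i) = D ∧
      Pairwise (fun i j => Disjoint (C i ×ˢ C' i) (C j ×ˢ C' j)) := by
  have hG : G.IsBipartiteWith L R := ⟨hdisj, fun i j => hbip i j⟩
  subst hnonEdges hD
  rw [← G.edgeSet_compl]
  have hpart := hG.isRectanglePartition_bipartiteRectangle.comp_equiv (Finite.equivFin _).symm
  refine ⟨_, _, _, ?_, fun i => bipartiteRectangle_subset _, hpart.iUnion_prod_eq,
    hpart.pairwise_disjoint⟩
  simpa using Set.nat_card_sum_sum_le_two_mul hdisj

/-- For a bipartite graph `G` on `n` vertices, the set of disjoint edge/non-edge pairs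
can be partitioned into at most `2n` products of a set of edges and a set of non-edges. -/
theorem bipartite_edge_nonedge_partition (n : ℕ) (G : SimpleGraph (Fin n))
    (L R : Set (Fin n)) (hLR : L ∪ R = Set.univ) (hdisj : Disjoint L R)
    (hbip : ∀ i j, G.Adj i j → (i ∈ L ∧ j ∈ R) ∨ (i ∈ R ∧ j ∈ L))
    (nonEdges : Set (Sym2 (Fin n)))
    (hnonEdges : nonEdges = {s | ¬ s.IsDiag ∧ s ∉ G.edgeSet})
    (D : Set (Sym2 (Fin n) × Sym2 (Fin n)))
    (hD : D = {p | p.1 ∈ G.edgeSet ∧ p.2 ∈ nonEdges ∧ ∀ v, v ∈ p.1 → ¬ v ∈ p.2}) :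
    ∃ (k : ℕ) (C : Fin k → Set (Sym2 (Fin n))) (C' : Fin k → Set (Sym2 (Fin n))),
      k ≤ 2 * n ∧
      (∀ i, C i ⊆ G.edgeSet ∧ C' i ⊆ nonEdges) ∧
      (⋃ i, C i ×ˢ C' i) = D ∧
      Pairwise (fun i j => Disjoint (C i ×ˢ C' i) (C j ×ˢ C' j)) :=
  bipartite_edge_nonedge_partition_general n G L R hdisj hbip nonEdges hnonEdges D hD
end
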